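/- For h > 0 let Ω(h) = {(x, y) ∈ ℝ² : x² + y² + x²y² < h}, and for nonnegative integers i, j let J_{ij}(h) = ∬_{Ω(h)} x^i y^j dx dy. Then: (a) J_{ij} is identically zero on (0, ∞) whenever i or j is odd; and (b) for every integer n ≥ 3 and all even nonnegative integers i, j with i + j ≤ n − 1, there exist real polynomials α and β, each of degree at most ⌊(n−3)/2⌋, such that J_{ij}(h) = α(h)·J_{00}(h) + β(h)·J_{20}(h) for all h > 0. -/

import Mathlib

open MeasureTheory Polynomial

noncomputable section

/-- The region bounded by the oval `{x² + y² + x²y² = h}`. -/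
def Omeg (h : ℝ) : Set (ℝ × ℝ) := {p | p.1 ^ 2 + p.2 ^ 2 + p.1 ^ 2 * p.2 ^ 2 < h}

/-- The moment integral `J_{ij}(h) = ∬_{Ω(h)} x^i y^j dx dy`. -/
def Jmom (i j : ℕ) : ℝ → ℝ := fun h => ∫ p in Omeg h, p.1 ^ i * p.2 ^ j

/-- slice half-width -/
def gfun (h y : ℝ) : ℝ := Real.sqrt ((h - y ^ 2) / (1 + y ^ 2))

lemma gfun_nonneg (h y : ℝ) : 0 ≤ gfun h y := Real.sqrt_nonneg _

lemma omeg_eq (h : ℝ) :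
    Omeg h = {p : ℝ × ℝ | p.1 ∈ Set.Ioo (-(gfun h p.2)) (gfun h p.2)} := by
  ext ⟨x, y⟩
  have h1 : (0:ℝ) < 1 + y ^ 2 := by positivity
  simp only [Omeg, gfun, Set.mem_setOf_eq, Set.mem_Ioo, ← abs_lt]
  rw [Real.lt_sqrt (abs_nonneg x), sq_abs, lt_div_iff₀ h1]
  constructor <;> intro hx <;> nlinarith

lemma measurableSet_omeg (h : ℝ) : MeasurableSet (Omeg h) := by
  have : IsOpen (Omeg h) := by
    have : Continuous fun p : ℝ × ℝ => p.1 ^ 2 + p.2 ^ 2 + p.1 ^ 2 * p.2 ^ 2 := by fun_prop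
    exact isOpen_lt this continuous_const
  exact this.measurableSet

lemma omeg_subset (h : ℝ) :
    Omeg h ⊆ Set.Icc (-Real.sqrt h, -Real.sqrt h) (Real.sqrt h, Real.sqrt h) := by
  rintro ⟨x, y⟩ hp
  simp only [Omeg, Set.mem_setOf_eq] at hp
  have hx : x ^ 2 ≤ h := by nlinarith
  have hy : y ^ 2 ≤ h := by nlinarith
  have hx' : |x| ≤ Real.sqrt h := by
    rw [← Real.sqrt_sq_eq_abs]; exact Real.sqrt_le_sqrt hx
  have hy' : |y| ≤ Real.sqrt h := by
    rw [← Real.sqrt_sq_eq_abs]; exact Real.sqrt_le_sqrt hy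
  rw [abs_le] at hx' hy'
  exact ⟨⟨hx'.1, hy'.1⟩, ⟨hx'.2, hy'.2⟩⟩

lemma integrableOn_omeg {f : ℝ × ℝ → ℝ} (hf : Continuous f) (h : ℝ) :
    IntegrableOn f (Omeg h) := by
  exact (hf.continuousOn.integrableOn_compact isCompact_Icc).mono_set (omeg_subset h)

/-- Fubini slicing for integrals over `Omeg h`. -/
lemma integral_omeg (h : ℝ) {f : ℝ × ℝ → ℝ} (hf : Continuous f) :
    ∫ p in Omeg h, f p
      = ∫ y : ℝ, ∫ x in Set.Ioo (-(gfun h y)) (gfun h y), f (x, y) := by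
  have hint : Integrable ((Omeg h).indicator f) volume :=
    (integrableOn_omeg hf h).integrable_indicator (measurableSet_omeg h)
  rw [← integral_indicator (measurableSet_omeg h)]
  rw [show (volume : Measure (ℝ × ℝ)) = (volume : Measure ℝ).prod volume from
    Measure.volume_eq_prod ℝ ℝ] at hint ⊢
  rw [MeasureTheory.integral_prod_symm _ hint]
  refine integral_congr_ae (Filter.Eventually.of_forall fun y => ?_)
  show (∫ x : ℝ, (Omeg h).indicator f (x, y))
      = ∫ x in Set.Ioo (-(gfun h y)) (gfun h y), f (x, y)
  rw [← integral_indicator measurableSet_Ioo]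
  refine integral_congr_ae (Filter.Eventually.of_forall fun x => ?_)
  rw [omeg_eq h]
  simp only [Set.indicator_apply, Set.mem_setOf_eq]

lemma Jmom_symm (i j : ℕ) (h : ℝ) : Jmom i j h = Jmom j i h := by
  unfold Jmom
  have hmp : MeasurePreserving (Prod.swap : ℝ × ℝ → ℝ × ℝ) volume volume := by
    rw [show (volume : Measure (ℝ × ℝ)) = (volume : Measure ℝ).prod volume from
      Measure.volume_eq_prod ℝ ℝ]
    exact Measure.measurePreserving_swap
  have hpre : (Prod.swap : ℝ × ℝ → ℝ × ℝ) ⁻¹' Omeg h = Omeg h := by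
    ext ⟨x, y⟩
    simp only [Omeg, Set.mem_preimage, Prod.swap_prod_mk, Set.mem_setOf_eq]
    constructor <;> intro <;> nlinarith
  have key := hmp.setIntegral_preimage_emb
    MeasurableEquiv.prodComm.measurableEmbedding
    (fun q : ℝ × ℝ => q.1 ^ j * q.2 ^ i) (Omeg h)
  rw [hpre] at key
  rw [← key]
  apply setIntegral_congr_fun (measurableSet_omeg h)
  intro p _
  simp [mul_comm]

lemma Jmom_odd_left (i j : ℕ) (hi : Odd i) (h : ℝ) : Jmom i j h = 0 := by
  let e : (ℝ × ℝ) ≃ᵐ (ℝ × ℝ) :=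
    { toFun := fun p => (-p.1, p.2)
      invFun := fun p => (-p.1, p.2)
      left_inv := fun p => by simp
      right_inv := fun p => by simp
      measurable_toFun := (measurable_fst.neg.prodMk measurable_snd)
      measurable_invFun := (measurable_fst.neg.prodMk measurable_snd) }
  have he : ∀ p : ℝ × ℝ, e p = (-p.1, p.2) := fun p => rfl
  have hmp : MeasurePreserving (⇑e) volume volume := by
    have : ⇑e = fun p : ℝ × ℝ => (-p.1, p.2) := funext he
    rw [this, show (volume : Measure (ℝ × ℝ)) = (volume : Measure ℝ).prod volume from
      Measure.volume_eq_prod ℝ ℝ]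
    exact (Measure.measurePreserving_neg _).prod (MeasurePreserving.id _)
  have hpre : (⇑e) ⁻¹' Omeg h = Omeg h := by
    ext ⟨x, y⟩
    simp only [he, Omeg, Set.mem_preimage, Set.mem_setOf_eq]
    constructor <;> intro <;> nlinarith [sq_nonneg x, sq_nonneg y]
  have key : Jmom i j h = - Jmom i j h := by
    unfold Jmom
    have h1 := hmp.setIntegral_preimage_emb e.measurableEmbedding
      (fun q : ℝ × ℝ => q.1 ^ i * q.2 ^ j) (Omeg h)
    rw [hpre] at h1
    calc ∫ p in Omeg h, p.1 ^ i * p.2 ^ j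
        = ∫ p in Omeg h, (e p).1 ^ i * (e p).2 ^ j := h1.symm
      _ = ∫ p in Omeg h, -(p.1 ^ i * p.2 ^ j) := by
          refine setIntegral_congr_fun (measurableSet_omeg h) fun p _ => ?_
          rw [he p]; simp [hi.neg_pow]
      _ = -∫ p in Omeg h, p.1 ^ i * p.2 ^ j := integral_neg _
  linarith


lemma inner_ftc (i j : ℕ) (h y : ℝ) :
    (∫ x in Set.Ioo (-(gfun h y)) (gfun h y),
      (((i:ℝ)+1) * h * x ^ i * y ^ j - ((i:ℝ)+3) * x ^ (i+2) * y ^ j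
        - ((i:ℝ)+1) * x ^ i * y ^ (j+2) - ((i:ℝ)+3) * x ^ (i+2) * y ^ (j+2))) = 0 := by
  set g := gfun h y with hgdef
  rcases eq_or_lt_of_le (gfun_nonneg h y) with hg | hg
  · have hgz : g = 0 := hg.symm
    rw [hgz, neg_zero, Set.Ioo_self, Measure.restrict_empty, integral_zero_measure]
  · set Q : ℝ → ℝ := fun x => (h - (x ^ 2 + y ^ 2 + x ^ 2 * y ^ 2)) * x ^ (i+1) * y ^ j
      with hQdef
    have hQder : ∀ x : ℝ, HasDerivAt Q
        (((i:ℝ)+1) * h * x ^ i * y ^ j - ((i:ℝ)+3) * x ^ (i+2) * y ^ j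
          - ((i:ℝ)+1) * x ^ i * y ^ (j+2) - ((i:ℝ)+3) * x ^ (i+2) * y ^ (j+2)) x := by
      intro x
      have h1 : HasDerivAt (fun x : ℝ => x ^ 2) (2 * x) x := by
        simpa using hasDerivAt_pow 2 x
      have h2 : HasDerivAt (fun x : ℝ => x ^ 2 * y ^ 2) (2 * x * y ^ 2) x :=
        h1.mul_const (y ^ 2)
      have hH : HasDerivAt (fun x : ℝ => h - (x ^ 2 + y ^ 2 + x ^ 2 * y ^ 2))
          (-(2 * x + 2 * x * y ^ 2)) x := by
        exact ((h1.add_const (y ^ 2)).add h2).const_sub h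
      have hP : HasDerivAt (fun x : ℝ => x ^ (i+1)) (((i:ℝ)+1) * x ^ i) x := by
        simpa using hasDerivAt_pow (i+1) x
      have := (hH.mul hP).mul_const (y ^ j)
      refine this.congr_deriv ?_
      ring
    have hcpos : 0 < (h - y ^ 2) / (1 + y ^ 2) := Real.sqrt_pos.mp hg
    have hg2 : g ^ 2 = (h - y ^ 2) / (1 + y ^ 2) := Real.sq_sqrt hcpos.le
    have hy1 : (0:ℝ) < 1 + y ^ 2 := by positivity
    have hb : h - (g ^ 2 + y ^ 2 + g ^ 2 * y ^ 2) = 0 := by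
      have h3 : g ^ 2 * (1 + y ^ 2) = h - y ^ 2 := by
        rw [hg2]; field_simp
      nlinarith [h3]
    have hQg : Q g = 0 := by
      show (h - (g ^ 2 + y ^ 2 + g ^ 2 * y ^ 2)) * g ^ (i+1) * y ^ j = 0
      rw [hb, zero_mul, zero_mul]
    have hQng : Q (-g) = 0 := by
      show (h - ((-g) ^ 2 + y ^ 2 + (-g) ^ 2 * y ^ 2)) * (-g) ^ (i+1) * y ^ j = 0
      have h4 : (-g : ℝ) ^ 2 = g ^ 2 := by ring
      rw [h4, hb, zero_mul, zero_mul]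
    have hcont : Continuous fun x : ℝ =>
        ((i:ℝ)+1) * h * x ^ i * y ^ j - ((i:ℝ)+3) * x ^ (i+2) * y ^ j
          - ((i:ℝ)+1) * x ^ i * y ^ (j+2) - ((i:ℝ)+3) * x ^ (i+2) * y ^ (j+2) := by
      fun_prop
    rw [← integral_Ioc_eq_integral_Ioo,
      ← intervalIntegral.integral_of_le (by linarith : -g ≤ g),
      intervalIntegral.integral_eq_sub_of_hasDerivAt (fun x _ => hQder x)
        (hcont.intervalIntegrable _ _), hQg, hQng, sub_zero]


lemma Jmom_rel1 (i j : ℕ) (h : ℝ) :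
    ((i:ℝ)+1) * h * Jmom i j h
      = ((i:ℝ)+3) * Jmom (i+2) j h + ((i:ℝ)+1) * Jmom i (j+2) h
        + ((i:ℝ)+3) * Jmom (i+2) (j+2) h := by
  have hc : Continuous (fun p : ℝ × ℝ =>
      ((i:ℝ)+1) * h * p.1 ^ i * p.2 ^ j - ((i:ℝ)+3) * p.1 ^ (i+2) * p.2 ^ j
        - ((i:ℝ)+1) * p.1 ^ i * p.2 ^ (j+2)
        - ((i:ℝ)+3) * p.1 ^ (i+2) * p.2 ^ (j+2)) := by fun_prop
  have h0 : (∫ p in Omeg h,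
      (((i:ℝ)+1) * h * p.1 ^ i * p.2 ^ j - ((i:ℝ)+3) * p.1 ^ (i+2) * p.2 ^ j
        - ((i:ℝ)+1) * p.1 ^ i * p.2 ^ (j+2)
        - ((i:ℝ)+3) * p.1 ^ (i+2) * p.2 ^ (j+2))) = 0 := by
    rw [integral_omeg h hc]
    simp only [inner_ftc i j h, integral_zero]
  have I0 : IntegrableOn (fun p : ℝ × ℝ => p.1 ^ i * p.2 ^ j) (Omeg h) :=
    integrableOn_omeg (by fun_prop) h
  have I1 : IntegrableOn (fun p : ℝ × ℝ => p.1 ^ (i+2) * p.2 ^ j) (Omeg h) :=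
    integrableOn_omeg (by fun_prop) h
  have I2 : IntegrableOn (fun p : ℝ × ℝ => p.1 ^ i * p.2 ^ (j+2)) (Omeg h) :=
    integrableOn_omeg (by fun_prop) h
  have I3 : IntegrableOn (fun p : ℝ × ℝ => p.1 ^ (i+2) * p.2 ^ (j+2)) (Omeg h) :=
    integrableOn_omeg (by fun_prop) h
  have hsplit : (∫ p in Omeg h,
      (((i:ℝ)+1) * h * p.1 ^ i * p.2 ^ j - ((i:ℝ)+3) * p.1 ^ (i+2) * p.2 ^ j
        - ((i:ℝ)+1) * p.1 ^ i * p.2 ^ (j+2)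
        - ((i:ℝ)+3) * p.1 ^ (i+2) * p.2 ^ (j+2)))
      = (((i:ℝ)+1) * h) * Jmom i j h - ((i:ℝ)+3) * Jmom (i+2) j h
        - ((i:ℝ)+1) * Jmom i (j+2) h - ((i:ℝ)+3) * Jmom (i+2) (j+2) h := by
    unfold Jmom
    rw [show (fun p : ℝ × ℝ =>
        ((i:ℝ)+1) * h * p.1 ^ i * p.2 ^ j - ((i:ℝ)+3) * p.1 ^ (i+2) * p.2 ^ j
          - ((i:ℝ)+1) * p.1 ^ i * p.2 ^ (j+2)
          - ((i:ℝ)+3) * p.1 ^ (i+2) * p.2 ^ (j+2))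
      = fun p : ℝ × ℝ =>
        (((i:ℝ)+1) * h) * (p.1 ^ i * p.2 ^ j) - (((i:ℝ)+3)) * (p.1 ^ (i+2) * p.2 ^ j)
          - (((i:ℝ)+1)) * (p.1 ^ i * p.2 ^ (j+2))
          - (((i:ℝ)+3)) * (p.1 ^ (i+2) * p.2 ^ (j+2)) from funext fun p => by ring]
    rw [integral_sub, integral_sub, integral_sub,
      integral_const_mul, integral_const_mul, integral_const_mul, integral_const_mul]
    · exact I0.const_mul _
    · exact I1.const_mul _
    · exact (I0.const_mul _).sub (I1.const_mul _)
    · exact I2.const_mul _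
    · exact ((I0.const_mul _).sub (I1.const_mul _)).sub (I2.const_mul _)
    · exact I3.const_mul _
  rw [h0] at hsplit
  linarith

lemma J_int (i j : ℕ) (h : ℝ) :
    Jmom (i+2) (j+2) h
      = (((i:ℝ)+1)/((i:ℝ)+3)) * (h * Jmom i j h)
        + (-(((i:ℝ)+1)/((i:ℝ)+3))) * Jmom i (j+2) h + (-1 : ℝ) * Jmom (i+2) j h := by
  have h1 := Jmom_rel1 i j h
  have h3 : ((i:ℝ)+3) ≠ 0 := by positivity
  field_simp
  linarith

lemma J_edge (i : ℕ) (h : ℝ) :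
    Jmom (i+2) 0 h
      = ((i:ℝ)/((i:ℝ)+3)) * (h * Jmom i 0 h) + (3/((i:ℝ)+3)) * Jmom i 2 h := by
  have h1 := Jmom_rel1 i 0 h
  have h2 := Jmom_rel1 0 i h
  rw [Jmom_symm 0 i, Jmom_symm (0+2) i, Jmom_symm 0 (i+2), Jmom_symm (0+2) (i+2)] at h2
  have h3 : ((i:ℝ)+3) ≠ 0 := by positivity
  field_simp
  linear_combination (-3/2) * h1 + (((i:ℝ)+3)/2) * h2

/-- representability in the module generated by `J₀₀, J₂₀` with poly coeffs of degree `≤ d`. -/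
def JRep (d : ℕ) (f : ℝ → ℝ) : Prop :=
  ∃ α β : Polynomial ℝ, α.natDegree ≤ d ∧ β.natDegree ≤ d ∧
    ∀ h : ℝ, 0 < h → f h = α.eval h * Jmom 0 0 h + β.eval h * Jmom 2 0 h

lemma JRep.mono {d d' : ℕ} {f : ℝ → ℝ} (hdd : d ≤ d') (hf : JRep d f) : JRep d' f := by
  obtain ⟨α, β, h1, h2, h3⟩ := hf
  exact ⟨α, β, h1.trans hdd, h2.trans hdd, h3⟩

lemma rep_J00 (d : ℕ) : JRep d (Jmom 0 0) :=
  ⟨1, 0, by simp, by simp, fun h _ => by simp⟩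

lemma rep_J20 (d : ℕ) : JRep d (Jmom 2 0) :=
  ⟨0, 1, by simp, by simp, fun h _ => by simp⟩

lemma JRep.congr {d : ℕ} {f g : ℝ → ℝ} (hf : JRep d f) (hfg : ∀ h : ℝ, 0 < h → f h = g h) :
    JRep d g := by
  obtain ⟨α, β, h1, h2, h3⟩ := hf
  exact ⟨α, β, h1, h2, fun h hh => (hfg h hh) ▸ h3 h hh⟩

lemma JRep.smul {d : ℕ} {f : ℝ → ℝ} (c : ℝ) (hf : JRep d f) :
    JRep d (fun h => c * f h) := by
  obtain ⟨α, β, h1, h2, h3⟩ := hf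
  refine ⟨Polynomial.C c * α, Polynomial.C c * β,
    (Polynomial.natDegree_C_mul_le _ _).trans h1,
    (Polynomial.natDegree_C_mul_le _ _).trans h2, fun h hh => ?_⟩
  simp only [Polynomial.eval_mul, Polynomial.eval_C]
  rw [h3 h hh]; ring

lemma JRep.add {d : ℕ} {f g : ℝ → ℝ} (hf : JRep d f) (hg : JRep d g) :
    JRep d (fun h => f h + g h) := by
  obtain ⟨α, β, h1, h2, h3⟩ := hf
  obtain ⟨α', β', h1', h2', h3'⟩ := hg
  refine ⟨α + α', β + β',
    (Polynomial.natDegree_add_le _ _).trans (max_le h1 h1'),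
    (Polynomial.natDegree_add_le _ _).trans (max_le h2 h2'), fun h hh => ?_⟩
  simp only [Polynomial.eval_add]
  rw [h3 h hh, h3' h hh]; ring

lemma JRep.hmul {d : ℕ} {f : ℝ → ℝ} (hf : JRep d f) :
    JRep (d+1) (fun h => h * f h) := by
  obtain ⟨α, β, h1, h2, h3⟩ := hf
  refine ⟨Polynomial.X * α, Polynomial.X * β, ?_, ?_, fun h hh => ?_⟩
  · refine (Polynomial.natDegree_mul_le (p := Polynomial.X) (q := α)).trans ?_
    have hx := Polynomial.natDegree_X_le (R := ℝ)
    omega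
  · refine (Polynomial.natDegree_mul_le (p := Polynomial.X) (q := β)).trans ?_
    have hx := Polynomial.natDegree_X_le (R := ℝ)
    omega
  · simp only [Polynomial.eval_mul, Polynomial.eval_X]
    rw [h3 h hh]; ring

lemma rep_even : ∀ m a b : ℕ, a + b = m → JRep (m - 1) (Jmom (2*a) (2*b)) := by
  intro m
  induction m using Nat.strong_induction_on with
  | _ m ih =>
  match m with
  | 0 =>
    intro a b hab
    obtain ⟨rfl, rfl⟩ : a = 0 ∧ b = 0 := by omega
    exact rep_J00 0
  | 1 =>
    intro a b hab
    rcases a with _ | a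
    · obtain rfl : b = 1 := by omega
      exact (rep_J20 0).congr (fun h _ => Jmom_symm 2 0 h)
    · obtain rfl : a = 0 := by omega
      obtain rfl : b = 0 := by omega
      exact rep_J20 0
  | k + 2 =>
    have hra : JRep k (Jmom (2*k+2) 0) := by
      have t := ih (k+1) (by omega) (k+1) 0 rfl
      rw [show 2*(k+1) = 2*k+2 from by ring, show (2*0 : ℕ) = 0 from rfl] at t
      exact t.mono (by omega)
    have hrb : JRep (k+1) (Jmom (2*k+2) 2) := by
      have t0 : JRep (k+1) (fun h => h * Jmom (2*k) 0 h) := by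
        have t := ih k (by omega) k 0 rfl
        rw [show (2*0 : ℕ) = 0 from rfl] at t
        exact t.hmul.mono (by omega)
      have t1 : JRep (k+1) (Jmom (2*k) 2) := by
        have t := ih (k+1) (by omega) k 1 (by omega)
        rw [show (2*1 : ℕ) = 2 from rfl] at t
        exact t.mono (by omega)
      have t2 : JRep (k+1) (Jmom (2*k+2) 0) := hra.mono (by omega)
      exact (((t0.smul ((((2*k : ℕ):ℝ)+1)/(((2*k : ℕ):ℝ)+3))).add
        (t1.smul (-((((2*k : ℕ):ℝ)+1)/(((2*k : ℕ):ℝ)+3))))).add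
        (t2.smul (-1 : ℝ))).congr (fun h _ => (J_int (2*k) 0 h).symm)
    have hedge : JRep (k+1) (Jmom (2*k+4) 0) := by
      have t0 : JRep (k+1) (fun h => h * Jmom (2*k+2) 0 h) := hra.hmul
      have t := ((t0.smul (((2*k+2 : ℕ):ℝ)/(((2*k+2 : ℕ):ℝ)+3))).add
        (hrb.smul (3/(((2*k+2 : ℕ):ℝ)+3)))).congr
        (fun h _ => (J_edge (2*k+2) h).symm)
      rw [show (2*k+2)+2 = 2*k+4 from by omega] at t
      exact t
    intro a b hab
    rcases b with _ | b'
    · obtain rfl : a = k+2 := by omega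
      rw [show 2*(k+2) = 2*k+4 from by ring, show (2*0 : ℕ) = 0 from rfl]
      exact hedge
    · rcases a with _ | a'
      · obtain rfl : b' = k+1 := by omega
        have t := hedge.congr (fun h _ => Jmom_symm (2*k+4) 0 h)
        rw [show (2*0 : ℕ) = 0 from rfl, show 2*(k+1+1) = 2*k+4 from by ring]
        exact t
      · have hab' : a' + b' = k := by omega
        rw [show 2*(a'+1) = 2*a'+2 from by ring, show 2*(b'+1) = 2*b'+2 from by ring]
        have t0 : JRep (k+1) (fun h => h * Jmom (2*a') (2*b') h) :=
          (ih k (by omega) a' b' hab').hmul.mono (by omega)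
        have t1 : JRep (k+1) (Jmom (2*a') (2*b'+2)) := by
          have t := ih (k+1) (by omega) a' (b'+1) (by omega)
          rw [show 2*(b'+1) = 2*b'+2 from by ring] at t
          exact t.mono (by omega)
        have t2 : JRep (k+1) (Jmom (2*a'+2) (2*b')) := by
          have t := ih (k+1) (by omega) (a'+1) b' (by omega)
          rw [show 2*(a'+1) = 2*a'+2 from by ring] at t
          exact t.mono (by omega)
        exact (((t0.smul ((((2*a' : ℕ):ℝ)+1)/(((2*a' : ℕ):ℝ)+3))).add
          (t1.smul (-((((2*a' : ℕ):ℝ)+1)/(((2*a' : ℕ):ℝ)+3))))).add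
          (t2.smul (-1 : ℝ))).congr (fun h _ => (J_int (2*a') (2*b') h).symm)

theorem moments_reduce_to_basis :
    (∀ i j : ℕ, (Odd i ∨ Odd j) → ∀ h : ℝ, 0 < h → Jmom i j h = 0) ∧
    (∀ n : ℕ, 3 ≤ n → ∀ i j : ℕ, Even i → Even j → i + j ≤ n - 1 →
      ∃ α β : Polynomial ℝ,
        α.natDegree ≤ (n - 3) / 2 ∧ β.natDegree ≤ (n - 3) / 2 ∧
        ∀ h : ℝ, 0 < h →
          Jmom i j h = α.eval h * Jmom 0 0 h + β.eval h * Jmom 2 0 h) := by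
  constructor
  · intro i j hodd h _
    rcases hodd with hi | hj
    · exact Jmom_odd_left i j hi h
    · rw [Jmom_symm i j h]
      exact Jmom_odd_left j i hj h
  · intro n hn i j hi hj hij
    obtain ⟨a, rfl⟩ := hi
    obtain ⟨b, rfl⟩ := hj
    have key := rep_even (a+b) a b rfl
    rw [show 2*a = a + a from by ring, show 2*b = b + b from by ring] at key
    obtain ⟨α, β, h1, h2, h3⟩ := key.mono (show (a+b) - 1 ≤ (n-3)/2 from by omega)
    exact ⟨α, β, h1, h2, h3⟩
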